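/- arXiv:2604.07688 — 5 statements merged into one kernel-verified Lean document; each statement's English description precedes it below -/
import Mathlib

section
/- Let B be a unital C*-algebra, a ∈ B, and (p_i)_{i∈ℕ} a sequence of nonzero mutually orthogonal projections in B satisfying conditions (1)–(4). Then the spectrum of a in B satisfies σ_B(a) ⊆ (∪_{i=1}^∞ σ_{p_i B p_i}(p_i a p_i)) ∪ {0}. -/
/-!
Fix `z ≠ 0` outside every corner spectrum and put `x = a - z`. By (1), `x` is block upper
triangular for each decomposition `1 = P_n + (1 - P_n)`, and an upper triangular element whose
two diagonal corners are invertible is invertible in the sum of the two corners. Induction on `n`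
makes `P_n x P_n` invertible in `P_n B P_n`. By (2), for large `n` the tail `(1 - P_n) a (1 - P_n)`
has norm `< |z|`, so the compression of `x` to the tail corner is invertible by a Neumann series.
Hence `x` is invertible in `B = (P_n + (1 - P_n)) B (P_n + (1 - P_n))`.
-/

/-- The smallest norm-closed star-subalgebra of `B` containing `S`. -/
def cstarGen {B : Type*} [NonUnitalCStarAlgebra B] (S : Set B) : Set B :=
  closure ((NonUnitalStarAlgebra.adjoin ℂ S : NonUnitalStarSubalgebra ℂ B) : Set B)

/-- `x` is invertible in the corner algebra `pBp` (with unit `p`). -/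
def cornerInvertible {B : Type*} [CStarAlgebra B] (p x : B) : Prop :=
  ∃ y : B, p * y * p = y ∧ x * y = p ∧ y * x = p

/-- The spectrum of `x ∈ pBp` in the unital algebra `pBp` (with unit `p`). -/
def cornerSpectrum {B : Type*} [CStarAlgebra B] (p x : B) : Set ℂ :=
  {z : ℂ | ¬ cornerInvertible p (x - z • p)}

open Finset

section OrthogonalIdempotents

variable {R : Type*} [Ring R] {I : Type*} {e : I → R}

theorem OrthogonalIdempotents.sum_mul_of_notMem (he : OrthogonalIdempotents e)
    {i : I} {s : Finset I} (h : i ∉ s) : (∑ j ∈ s, e j) * e i = 0 := by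
  rw [sum_mul]
  exact sum_eq_zero fun j hj => he.ortho (ne_of_mem_of_not_mem hj h)

end OrthogonalIdempotents

section Algebra

variable {R A : Type*} [CommRing R] [Ring A] [Algebra R A]

theorem mul_sub_smul_one_mul_of_mul_eq_zero {f e : A} (a : A) (z : R) (h : f * e = 0) :
    f * (a - z • 1) * e = f * a * e := by
  rw [mul_sub, sub_mul, mul_smul_one, smul_mul_assoc, h, smul_zero, sub_zero]

theorem mul_sub_smul_one_mul_self {e : A} (he : IsIdempotentElem e) (a : A) (z : R) :
    e * (a - z • 1) * e = e * a * e - z • e := by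
  rw [mul_sub, sub_mul, mul_smul_one, smul_mul_assoc, he.eq]

end Algebra

section Corner

variable {B : Type*} [CStarAlgebra B]

theorem cornerInvertible_iff {e x : B} (he : IsIdempotentElem e) :
    cornerInvertible e (e * x * e) ↔
      ∃ y, e * y = y ∧ y * e = y ∧ e * x * y = e ∧ y * x * e = e := by
  constructor
  · rintro ⟨y, hy, hxy, hyx⟩
    have hey : e * y = y := by rw [← hy, ← mul_assoc, ← mul_assoc, he.eq]
    have hye : y * e = y := by rw [← hy, mul_assoc, he.eq]
    refine ⟨y, hey, hye, ?_, ?_⟩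
    · rwa [mul_assoc _ e y, hey] at hxy
    · rwa [← mul_assoc, ← mul_assoc, hye] at hyx
  · rintro ⟨y, hey, hye, hxy, hyx⟩
    refine ⟨y, by rw [hey, hye], ?_, ?_⟩
    · rwa [mul_assoc _ e y, hey]
    · rwa [← mul_assoc, ← mul_assoc, hye]

theorem isUnit_of_cornerInvertible_one {x : B} (hx : cornerInvertible 1 (1 * x * 1)) :
    IsUnit x := by
  obtain ⟨y, -, -, hxy, hyx⟩ := (cornerInvertible_iff IsIdempotentElem.one).1 hx
  rw [one_mul] at hxy
  rw [mul_one] at hyx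
  exact isUnit_iff_exists.2 ⟨y, hxy, hyx⟩

/-- Inversion of an element `x` of `(P + q) B (P + q)` that is block upper triangular
(`q x P = 0`) with invertible diagonal blocks. -/
theorem cornerInvertible_add_of_mul_mul_eq_zero {P q x : B} (hP : IsIdempotentElem P)
    (hq : IsIdempotentElem q) (hPq : P * q = 0) (hqP : q * P = 0) (hqxP : q * x * P = 0)
    (hPx : cornerInvertible P (P * x * P)) (hqx : cornerInvertible q (q * x * q)) :
    cornerInvertible (P + q) ((P + q) * x * (P + q)) := by
  obtain ⟨u, hPu, huP, hxu, hux⟩ := (cornerInvertible_iff hP).1 hPx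
  obtain ⟨w, hqw, hwq, hxw, hwx⟩ := (cornerInvertible_iff hq).1 hqx
  have heu : (P + q) * u = u := by rw [add_mul, hPu, ← hPu, ← mul_assoc, hqP, zero_mul, add_zero]
  have hew : (P + q) * w = w := by rw [add_mul, hqw, ← hqw, ← mul_assoc, hPq, zero_mul, zero_add]
  have hue : u * (P + q) = u := by rw [mul_add, huP, ← huP, mul_assoc, hPq, mul_zero, add_zero]
  have hwe : w * (P + q) = w := by rw [mul_add, hwq, ← hwq, mul_assoc, hqP, mul_zero, zero_add]
  have hexu : (P + q) * x * u = P := by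
    rw [add_mul, add_mul, hxu, ← hPu, ← mul_assoc, hqxP, zero_mul, add_zero]
  have hexw : (P + q) * x * w = P * x * w + q := by rw [add_mul, add_mul, hxw]
  have huxe : u * x * (P + q) = P + u * x * q := by rw [mul_add, hux]
  have hwxe : w * x * (P + q) = q := by
    rw [mul_add, hwx, ← hwq, mul_assoc w q x, mul_assoc w, hqxP, mul_zero, zero_add]
  refine (cornerInvertible_iff (hP.add hq (by rw [hPq, hqP, add_zero]))).2
    ⟨u + w - u * x * w, ?_, ?_, ?_, ?_⟩
  · rw [mul_sub, mul_add, heu, hew, ← mul_assoc, ← mul_assoc, heu]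
  · rw [sub_mul, add_mul, hue, hwe, mul_assoc, hwe]
  · calc (P + q) * x * (u + w - u * x * w)
        = (P + q) * x * u + (P + q) * x * w - (P + q) * x * u * x * w := by noncomm_ring
      _ = P + q := by rw [hexu, hexw]; abel
  · calc (u + w - u * x * w) * x * (P + q)
        = u * x * (P + q) + w * x * (P + q) - u * x * (w * x * (P + q)) := by noncomm_ring
      _ = P + q := by rw [huxe, hwxe]; abel

theorem cornerInvertible_mul_mul_of_isUnit {e c : B} (he : IsIdempotentElem e)
    (hec : Commute e c) (hc : IsUnit c) : cornerInvertible e (e * c * e) := by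
  obtain ⟨c, rfl⟩ := hc
  have hec' : Commute e ↑c⁻¹ := hec.units_inv_right
  refine (cornerInvertible_iff he).2 ⟨↑c⁻¹ * e, ?_, ?_, ?_, ?_⟩
  · rw [← mul_assoc, hec'.eq, mul_assoc, he.eq]
  · rw [mul_assoc, he.eq]
  · rw [hec.eq, mul_assoc, ← mul_assoc e, hec'.eq, ← mul_assoc, ← mul_assoc, c.mul_inv, one_mul,
      he.eq]
  · rw [mul_assoc (↑c⁻¹ : B) e, hec.eq, ← mul_assoc, c.inv_mul, one_mul, he.eq]

theorem cornerInvertible_sub_smul_one_of_norm_lt {e a : B} {z : ℂ} (he : IsIdempotentElem e)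
    (h : ‖e * a * e‖ < ‖z‖) : cornerInvertible e (e * (a - z • 1) * e) := by
  have hunit : IsUnit (e * a * e - z • 1) := by
    nontriviality B
    have := spectrum.mem_resolventSet_of_norm_lt (𝕜 := ℂ) h
    rw [spectrum.mem_resolventSet_iff, Algebra.algebraMap_eq_smul_one] at this
    simpa using this.neg
  have hcomm : Commute e (e * a * e - z • 1) := by
    refine Commute.sub_right ?_ ((Commute.one_right e).smul_right z)
    rw [commute_iff_eq, ← mul_assoc, ← mul_assoc, he.eq, mul_assoc (e * a) e e, he.eq]
  convert cornerInvertible_mul_mul_of_isUnit he hcomm hunit using 1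
  rw [mul_sub_smul_one_mul_self he, mul_sub_smul_one_mul_self he, ← mul_assoc e (e * a) e,
    ← mul_assoc e e a, he.eq, mul_assoc (e * a) e e, he.eq]

theorem cornerInvertible_sum_range {p : ℕ → B} (hp : OrthogonalIdempotents p) {x : B}
    (hx : ∀ n, (1 - ∑ i ∈ range n, p i) * x * ∑ i ∈ range n, p i = 0)
    (hdiag : ∀ i, cornerInvertible (p i) (p i * x * p i)) (n : ℕ) :
    cornerInvertible (∑ i ∈ range n, p i) ((∑ i ∈ range n, p i) * x * ∑ i ∈ range n, p i) := by
  induction n with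
  | zero => exact ⟨0, by simp⟩
  | succ n ih =>
    have hpS : p n * ∑ i ∈ range n, p i = 0 := hp.mul_sum_of_notMem notMem_range_self
    have hpxS : p n * x * ∑ i ∈ range n, p i = 0 := by
      calc p n * x * ∑ i ∈ range n, p i
          = p n * ((1 - ∑ i ∈ range n, p i) * x * ∑ i ∈ range n, p i) := by
            simp only [← mul_assoc, mul_one_sub, hpS, sub_zero]
        _ = 0 := by rw [hx, mul_zero]
    rw [sum_range_succ]
    exact cornerInvertible_add_of_mul_mul_eq_zero hp.isIdempotentElem_sum (hp.idem n)
      (hp.sum_mul_of_notMem notMem_range_self) hpS hpxS ih (hdiag n)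

end Corner

theorem spectrum_subset_iUnion_cornerSpectrum_general
    {B : Type*} [CStarAlgebra B] (a : B) (p : ℕ → B)
    (hidem : ∀ i, p i * p i = p i)
    (horth : ∀ i i', i ≠ i' → p i * p i' = 0)
    (h1 : ∀ n : ℕ,
      (1 - ∑ i ∈ Finset.range n, p i) * a * (∑ i ∈ Finset.range n, p i) = 0)
    (h2 : Filter.Tendsto
      (fun n : ℕ => ‖(1 - ∑ i ∈ Finset.range n, p i) * a * (1 - ∑ i ∈ Finset.range n, p i)‖)
      Filter.atTop (nhds 0)) :
    spectrum ℂ a ⊆ (⋃ i : ℕ, cornerSpectrum (p i) (p i * a * p i)) ∪ {0} := by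
  intro z hz
  by_contra hmem
  simp only [Set.mem_union, Set.mem_iUnion, Set.mem_singleton_iff, not_or, not_exists,
    cornerSpectrum, Set.mem_ofPred_eq, not_not] at hmem
  obtain ⟨hdiag, hz0⟩ := hmem
  have hp : OrthogonalIdempotents p := ⟨hidem, fun i j hij => horth i j hij⟩
  have hS : ∀ n, IsIdempotentElem (∑ i ∈ range n, p i) := fun n => hp.isIdempotentElem_sum
  have hx : ∀ n, (1 - ∑ i ∈ range n, p i) * (a - z • 1) * ∑ i ∈ range n, p i = 0 := fun n => by
    rw [mul_sub_smul_one_mul_of_mul_eq_zero a z (hS n).one_sub_mul_self, h1]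
  obtain ⟨n, hn⟩ := (h2.eventually (gt_mem_nhds (norm_pos_iff.2 hz0))).exists
  have hhead := cornerInvertible_sum_range hp hx
    (fun i => by rw [mul_sub_smul_one_mul_self (hp.idem i)]; exact hdiag i) n
  have htail := cornerInvertible_sub_smul_one_of_norm_lt (hS n).one_sub hn
  have hall := cornerInvertible_add_of_mul_mul_eq_zero (hS n) (hS n).one_sub
    (hS n).mul_one_sub_self (hS n).one_sub_mul_self (hx n) hhead htail
  rw [add_sub_cancel] at hall
  refine hz ?_
  rw [spectrum.mem_resolventSet_iff, Algebra.algebraMap_eq_smul_one, ← neg_sub]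
  exact (isUnit_of_cornerInvertible_one hall).neg

theorem spectrum_subset_iUnion_cornerSpectrum
    {B : Type*} [CStarAlgebra B] (a : B) (p : ℕ → B)
    (hsa : ∀ i, IsSelfAdjoint (p i)) (hidem : ∀ i, p i * p i = p i)
    (hne : ∀ i, p i ≠ 0)
    (horth : ∀ i i', i ≠ i' → p i * p i' = 0)
    (h1 : ∀ n : ℕ,
      (1 - ∑ i ∈ Finset.range n, p i) * a * (∑ i ∈ Finset.range n, p i) = 0)
    (h2 : Filter.Tendsto
      (fun n : ℕ => ‖(1 - ∑ i ∈ Finset.range n, p i) * a * (1 - ∑ i ∈ Finset.range n, p i)‖)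
      Filter.atTop (nhds 0))
    (h3 : ∀ i i', i ≠ i' →
      cornerSpectrum (p i) (p i * a * p i) ∩ cornerSpectrum (p i') (p i' * a * p i') = ∅)
    (h4 : ∀ i, cornerInvertible (p i) (p i * a * p i)) :
    spectrum ℂ a ⊆ (⋃ i : ℕ, cornerSpectrum (p i) (p i * a * p i)) ∪ {0} :=
  spectrum_subset_iUnion_cornerSpectrum_general a p hidem horth h1 h2
end

section
/- Let B be a unital C*-algebra, a ∈ B, and (p_i)_{i∈ℕ} a sequence of nonzero mutually orthogonal projections in B satisfying condition (1): (1 − P_n) a P_n = 0 for every n ∈ ℕ. Then for all n ∈ ℕ and all m ≥ n, σ_{(1−P_{n−1})B(1−P_{n−1})}((1 − P_{n−1}) a (1 − P_{n−1})) ⊆ (∪_{j=n}^{m} σ_{p_j B p_j}(p_j a p_j)) ∪ σ_{(1−P_m)B(1−P_m)}((1 − P_m) a (1 − P_m)). -/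
section key
variable {B : Type*} [Ring B]

private lemma mulh {u v w : B} (h : u * v = w) (z : B) : u * (v * z) = w * z := by
  rw [← mul_assoc, h]

private lemma key' (p q A C D y1 y2 : B)
    (hp : p * p = p) (hpq : p * q = 0) (hqp : q * p = 0)
    (hpA : p * A = A) (hAp : A * p = A) (hpC : p * C = C) (hCq : C * q = C)
    (hqD : q * D = D) (hDq : D * q = D)
    (hy1 : p * y1 = y1) (hy1p : y1 * p = y1) (hy2 : q * y2 = y2) (hy2q : y2 * q = y2)
    (hl1 : A * y1 = p) (hr1 : y1 * A = p) (hl2 : D * y2 = q) (hr2 : y2 * D = q) :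
    ∃ y, (p + q) * y * (p + q) = y ∧ (A + C + D) * y = p + q ∧ y * (A + C + D) = p + q := by
  have hAq : A * q = 0 := by rw [← hAp, mul_assoc, hpq, mul_zero]
  have hqA : q * A = 0 := by rw [← hpA, ← mul_assoc, hqp, zero_mul]
  have hCp : C * p = 0 := by rw [← hCq, mul_assoc, hqp, mul_zero]
  have hqC : q * C = 0 := by rw [← hpC, ← mul_assoc, hqp, zero_mul]
  have hDp : D * p = 0 := by rw [← hDq, mul_assoc, hqp, mul_zero]
  have hpD : p * D = 0 := by rw [← hqD, ← mul_assoc, hpq, zero_mul]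
  have hqy1 : q * y1 = 0 := by rw [← hy1, ← mul_assoc, hqp, zero_mul]
  have hy1q : y1 * q = 0 := by rw [← hy1p, mul_assoc, hpq, mul_zero]
  have hpy2 : p * y2 = 0 := by rw [← hy2, ← mul_assoc, hpq, zero_mul]
  have hy2p : y2 * p = 0 := by rw [← hy2q, mul_assoc, hqp, mul_zero]
  have hAy2 : A * y2 = 0 := by rw [← hy2, ← mul_assoc, hAq, zero_mul]
  have hCy1 : C * y1 = 0 := by rw [← hy1, ← mul_assoc, hCp, zero_mul]
  have hDy1 : D * y1 = 0 := by rw [← hy1, ← mul_assoc, hDp, zero_mul]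
  have hy1D : y1 * D = 0 := by rw [← hqD, ← mul_assoc, hy1q, zero_mul]
  have hy2A : y2 * A = 0 := by rw [← hpA, ← mul_assoc, hy2p, zero_mul]
  have hy2C : y2 * C = 0 := by rw [← hpC, ← mul_assoc, hy2p, zero_mul]
  have hy1C : p * (y1 * C) = y1 * C := by rw [← mul_assoc, hy1]
  have hy1Cq : y1 * (C * q) = y1 * C := by rw [← mul_assoc, mul_assoc, hCq]
  refine ⟨y1 + y2 - y1 * C * y2, ?_, ?_, ?_⟩
  · simp only [mul_add, add_mul, mul_sub, sub_mul, mul_assoc,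
      mulh hp, mulh hpq, mulh hqp, mulh hpA, mulh hpC, mulh hqD,
      mulh hy1, mulh hy2, mulh hqy1, mulh hpy2, mulh hqC, mulh hqA, mulh hpD,
      hy1p, hy2q, hy1q, hy2p, hCq, hCp, zero_mul, mul_zero, add_zero, zero_add,
      hy1, hy2, hqy1, hpy2]
    abel
  · simp only [mul_add, add_mul, mul_sub, sub_mul, mul_assoc,
      mulh hl1, mulh hr1, mulh hl2, mulh hr2, mulh hAy2, mulh hCy1, mulh hDy1,
      mulh hpC, mulh hCq, mulh hy2, mulh hy1, mulh hp,
      hl1, hl2, hAy2, hCy1, hDy1, hy2, zero_mul, mul_zero, add_zero, zero_add]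
    abel
  · simp only [mul_add, add_mul, mul_sub, sub_mul, mul_assoc,
      mulh hr1, mulh hl2, mulh hr2, mulh hy1D, mulh hy2A, mulh hy2C,
      mulh hCq, mulh hy1, mulh hy2q,
      hr1, hr2, hy1D, hy2A, hy2C, hy1Cq, hy1C, hqy1, hpy2,
      zero_mul, mul_zero, add_zero, zero_add]
    abel
end key

section step
variable {B : Type*} [CStarAlgebra B]

private lemma corner_step (a : B) (p : ℕ → B)
    (hidem : ∀ i, p i * p i = p i)
    (horth : ∀ i i', i ≠ i' → p i * p i' = 0)
    (h1 : ∀ n : ℕ,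
      (1 - ∑ i ∈ Finset.range n, p i) * a * (∑ i ∈ Finset.range n, p i) = 0)
    (n : ℕ) :
    cornerSpectrum (1 - ∑ i ∈ Finset.range n, p i)
        ((1 - ∑ i ∈ Finset.range n, p i) * a * (1 - ∑ i ∈ Finset.range n, p i)) ⊆
      cornerSpectrum (p n) (p n * a * p n) ∪
        cornerSpectrum (1 - ∑ i ∈ Finset.range (n + 1), p i)
          ((1 - ∑ i ∈ Finset.range (n + 1), p i) * a *
            (1 - ∑ i ∈ Finset.range (n + 1), p i)) := by
  set P : ℕ → B := fun k => ∑ i ∈ Finset.range k, p i with hP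
  have hPp : ∀ k, (P k) * p k = 0 := by
    intro k
    rw [hP]
    simp only [Finset.sum_mul]
    exact Finset.sum_eq_zero fun i hi =>
      horth i k (by exact Nat.ne_of_lt (Finset.mem_range.mp hi))
  have hpP : ∀ k, p k * P k = 0 := by
    intro k
    rw [hP]
    simp only [Finset.mul_sum]
    exact Finset.sum_eq_zero fun i hi =>
      horth k i (by exact (Nat.ne_of_lt (Finset.mem_range.mp hi)).symm)
  have hPsucc : ∀ k, P (k + 1) = P k + p k := fun k => Finset.sum_range_succ p k
  have hPP : ∀ k, P k * P k = P k := by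
    intro k
    induction k with
    | zero => simp [hP]
    | succ k ih =>
      rw [hPsucc, add_mul, mul_add, mul_add, ih, hPp k, hpP k, hidem k]
      abel
  intro z hz
  by_contra hmem
  simp only [Set.mem_union, not_or] at hmem
  obtain ⟨hm1, hm2⟩ := hmem
  simp only [cornerSpectrum, Set.mem_setOf_eq, not_not] at hm1 hm2
  obtain ⟨y1, hy1c, hl1, hr1⟩ := hm1
  obtain ⟨y2, hy2c, hl2, hr2⟩ := hm2
  apply hz
  -- notation
  set pn := p n with hpn
  set q := 1 - P (n + 1) with hq
  have hqsum : 1 - P n = pn + q := by rw [hq, hPsucc]; abel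
  have hpq : pn * q = 0 := by
    rw [hq, mul_sub, mul_one, hPsucc, mul_add, hpP n, hidem n, zero_add, sub_self]
  have hqp : q * pn = 0 := by
    rw [hq, sub_mul, one_mul, hPsucc, add_mul, hPp n, hidem n, zero_add, sub_self]
  have hqq : q * q = q := by
    rw [hq]
    simp only [sub_mul, mul_sub, mul_one, one_mul, hPP]
    abel
  have hqap : q * a * pn = 0 := by
    have h0 : P (n + 1) * pn = pn := by
      rw [hPsucc, add_mul, hPp n, hidem n, zero_add]
    calc q * a * pn = (1 - P (n + 1)) * a * (P (n + 1) * pn) := by rw [hq, h0]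
      _ = (1 - P (n + 1)) * a * P (n + 1) * pn := by rw [mul_assoc _ _ pn]
      _ = 0 := by rw [h1 (n + 1), zero_mul]
  -- derived absorptions for y1, y2
  have hy1l : pn * y1 = y1 := by
    rw [← hy1c]; simp only [← mul_assoc]; rw [hidem n]
  have hy1r : y1 * pn = y1 := by
    rw [← hy1c]; simp only [mul_assoc]; rw [hidem n]
  have hy2l : q * y2 = y2 := by
    rw [← hy2c]; simp only [← mul_assoc]; rw [hqq]
  have hy2r : y2 * q = y2 := by
    rw [← hy2c]; simp only [mul_assoc]; rw [hqq]
  -- block components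
  set A := pn * a * pn - z • pn with hA
  set C := pn * a * q with hC
  set D := q * a * q - z • q with hD
  have hpA : pn * A = A := by
    rw [hA, mul_sub, mul_smul_comm, hidem n]
    congr 1
    simp only [← mul_assoc]; rw [hidem n]
  have hAp : A * pn = A := by
    rw [hA, sub_mul, smul_mul_assoc, hidem n]
    congr 1
    simp only [mul_assoc]; rw [hidem n]
  have hpC : pn * C = C := by
    rw [hC]; simp only [← mul_assoc]; rw [hidem n]
  have hCq : C * q = C := by
    rw [hC]; simp only [mul_assoc]; rw [hqq]
  have hqD : q * D = D := by
    rw [hD, mul_sub, mul_smul_comm, hqq]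
    congr 1
    simp only [← mul_assoc]; rw [hqq]
  have hDq : D * q = D := by
    rw [hD, sub_mul, smul_mul_assoc, hqq]
    congr 1
    simp only [mul_assoc]; rw [hqq]
  obtain ⟨y, hyc, hyl, hyr⟩ := key' pn q A C D y1 y2 (hidem n) hpq hqp hpA hAp hpC hCq
    hqD hDq hy1l hy1r hy2l hy2r hl1 hr1 hl2 hr2
  have hACD : (1 - P n) * a * (1 - P n) - z • (1 - P n) = A + C + D := by
    rw [hqsum, hA, hC, hD]
    simp only [add_mul, mul_add, smul_add]
    rw [hqap]
    abel
  exact ⟨y, by rwa [hqsum], by rw [hACD, hqsum] at *; exact hyl,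
    by rw [hACD, hqsum] at *; exact hyr⟩
end step

/-- Here `p i` plays the role of `p_{i+1}` in the paper, so that
`∑ i ∈ Finset.range n, p i` is `P_n`; the paper's pair `(n, m)` with `1 ≤ n ≤ m`
corresponds to `(n - 1, m)` below, whence the hypothesis `n < m`. -/
theorem cornerSpectrum_subset_union
    {B : Type*} [CStarAlgebra B] (a : B) (p : ℕ → B)
    (hsa : ∀ i, IsSelfAdjoint (p i)) (hidem : ∀ i, p i * p i = p i)
    (hne : ∀ i, p i ≠ 0)
    (horth : ∀ i i', i ≠ i' → p i * p i' = 0)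
    (h1 : ∀ n : ℕ,
      (1 - ∑ i ∈ Finset.range n, p i) * a * (∑ i ∈ Finset.range n, p i) = 0) :
    ∀ n m : ℕ, n < m →
      cornerSpectrum (1 - ∑ i ∈ Finset.range n, p i)
          ((1 - ∑ i ∈ Finset.range n, p i) * a * (1 - ∑ i ∈ Finset.range n, p i)) ⊆
        (⋃ j ∈ Finset.Ico n m, cornerSpectrum (p j) (p j * a * p j)) ∪
          cornerSpectrum (1 - ∑ i ∈ Finset.range m, p i)
            ((1 - ∑ i ∈ Finset.range m, p i) * a * (1 - ∑ i ∈ Finset.range m, p i)) := by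
  intro n m hnm
  induction m, hnm using Nat.le_induction with
  | base =>
    intro z hz
    rcases corner_step a p hidem horth h1 n hz with h | h
    · exact Or.inl (Set.mem_biUnion (Finset.mem_Ico.mpr ⟨le_refl n, n.lt_succ_self⟩) h)
    · exact Or.inr h
  | succ m hm ih =>
    intro z hz
    rcases ih hz with h | h
    · left
      simp only [Set.mem_iUnion, exists_prop] at h ⊢
      obtain ⟨j, hj, hjz⟩ := h
      exact ⟨j, Finset.Ico_subset_Ico_right (Nat.le_succ m) hj, hjz⟩
    · rcases corner_step a p hidem horth h1 m h with h' | h'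
      · exact Or.inl (Set.mem_biUnion
          (Finset.mem_Ico.mpr ⟨Nat.le_of_succ_le hm, m.lt_succ_self⟩) h')
      · exact Or.inr h'
end

section
/- Let B be a unital C*-algebra containing a unital C*-subalgebra D and nonzero partial isometries v_1, …, v_n satisfying conditions (a)–(d). Then the map Φ : M_n((v_1 v_1*) D (v_1 v_1*)) → C*(D ∪ {v_1, …, v_n}) defined by Φ([b_{i,j}]_{i,j=1}^{n}) = Σ_{i=1}^{n} Σ_{j=1}^{n} v_i* b_{i,j} v_j is a *-isomorphism. -/
/-- The map `Φ` on matrices with entries in the corner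
`(v₁v₁*)D(v₁v₁*)` is a `*`-isomorphism onto `C*(D ∪ {v₁, …, vₙ})`:
it is multiplicative, additive, `ℂ`-homogeneous, star-preserving and injective on
such matrices, and its image is exactly `C*(D ∪ {v₁, …, vₙ})`. -/
theorem matrix_corner_star_iso
    {B : Type*} [CStarAlgebra B] (D : StarSubalgebra ℂ B) (hDclosed : IsClosed (D : Set B))
    (n : ℕ) (hn : 0 < n) (v : Fin n → B)
    (hv_ne : ∀ k, v k ≠ 0)
    (hv_pi : ∀ k, v k * star (v k) * v k = v k)
    (ha : ∀ k, v ⟨0, hn⟩ = v k * star (v k))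
    (hb₁ : ∀ k k', k ≠ k' → (star (v k) * v k) * (star (v k') * v k') = 0)
    (hb₂ : ∑ k, star (v k) * v k = 1)
    (hc : ∀ k, ∀ d ∈ D, (star (v k) * v k) * d = d * (star (v k) * v k))
    (hd : ∀ k, ∀ d ∈ D, v k * d * star (v k) ∈ D) :
    ∀ p : B, p = v ⟨0, hn⟩ * star (v ⟨0, hn⟩) →
    ∀ S : Set (Matrix (Fin n) (Fin n) B), S = {M | ∀ i j, ∃ d ∈ D, M i j = p * d * p} →
    ∀ Φ : Matrix (Fin n) (Fin n) B → B, Φ = (fun M => ∑ i, ∑ j, star (v i) * M i j * v j) →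
      (∀ M ∈ S, ∀ N ∈ S, Φ (M * N) = Φ M * Φ N) ∧
      (∀ M ∈ S, ∀ N ∈ S, Φ (M + N) = Φ M + Φ N) ∧
      (∀ (c : ℂ), ∀ M ∈ S, Φ (c • M) = c • Φ M) ∧
      (∀ M ∈ S, Φ (star M) = star (Φ M)) ∧
      (∀ M ∈ S, ∀ N ∈ S, Φ M = Φ N → M = N) ∧
      Φ '' S = cstarGen ((D : Set B) ∪ Set.range v) := by
  intro p hp S hS Φ hΦ
  subst hS hΦ
  set z : Fin n := ⟨0, hn⟩ with hz
  -- ### basic facts about `p` and the `v k`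
  have hpz : p = v z := by rw [hp, ← ha z]
  have hps : star p = p := by rw [hp, star_mul, star_star, ← hp]
  have hvvs : ∀ k, v k * star (v k) = p := fun k => (ha k).symm.trans hpz.symm
  have hpv : ∀ k, p * v k = v k := by
    intro k; rw [← hvvs k]; exact hv_pi k
  have hvp : ∀ k, star (v k) * p = star (v k) := by
    intro k
    have := congrArg star (hpv k)
    rwa [star_mul, hps] at this
  have hpp : p * p = p := by have := hpv z; rwa [← hpz] at this
  have hvei : ∀ k, v k * (star (v k) * v k) = v k := by
    intro k; rw [← mul_assoc]; exact hv_pi k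
  have horth : ∀ j k, j ≠ k → v j * star (v k) = 0 := by
    intro j k hjk
    have h2 : (star (v k) * v k) * star (v k) = star (v k) := by
      have := congrArg star (hv_pi k)
      rwa [star_mul, star_mul, star_star, ← mul_assoc] at this
    calc v j * star (v k) = (v j * (star (v j) * v j)) * star (v k) := by rw [hvei]
      _ = v j * ((star (v j) * v j) * star (v k)) := by rw [mul_assoc]
      _ = v j * ((star (v j) * v j) * ((star (v k) * v k) * star (v k))) := by rw [h2]
      _ = v j * (((star (v j) * v j) * (star (v k) * v k)) * star (v k)) := by
          simp only [mul_assoc]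
      _ = 0 := by rw [hb₁ j k hjk, zero_mul, mul_zero]
  have hvv : ∀ j k, v j * star (v k) = if j = k then p else 0 := by
    intro j k
    split_ifs with h
    · subst h; exact hvvs j
    · exact horth j k h
  have hpD : p ∈ D := by
    have := hd z 1 (one_mem D)
    rwa [mul_one, ← hp] at this
  have habsorb : ∀ d : B, p * (p * d * p) * p = p * d * p := by
    intro d
    have h : p * (p * d * p) * p = (p * p) * d * (p * p) := by simp only [mul_assoc]
    rw [h, hpp]
  -- ### entry recovery
  have entry : ∀ (M : Matrix (Fin n) (Fin n) B) (i j : Fin n),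
      v i * (∑ k, ∑ l, star (v k) * M k l * v l) * star (v j) = p * M i j * p := by
    intro M i j
    have term : ∀ k l, v i * (star (v k) * M k l * v l) * star (v j)
        = (if i = k then p else 0) * M k l * (if l = j then p else 0) := by
      intro k l
      rw [← hvv i k, ← hvv l j]
      simp only [mul_assoc]
    calc v i * (∑ k, ∑ l, star (v k) * M k l * v l) * star (v j)
        = ∑ k, ∑ l, v i * (star (v k) * M k l * v l) * star (v j) := by
          simp only [Finset.mul_sum, Finset.sum_mul]
      _ = ∑ k, ∑ l, (if i = k then p else 0) * M k l * (if l = j then p else 0) := by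
          simp only [term]
      _ = p * M i j * p := by
          simp [ite_mul, mul_ite, zero_mul, mul_zero, Finset.sum_ite_eq, Finset.sum_ite_eq']
  -- ### decomposition of an arbitrary element
  have decomp : ∀ x : B, ∑ i, ∑ j, star (v i) * (v i * x * star (v j)) * v j = x := by
    intro x
    have term : ∀ i j : Fin n, star (v i) * (v i * x * star (v j)) * v j
        = (star (v i) * v i) * x * (star (v j) * v j) := by
      intro i j; simp only [mul_assoc]
    calc ∑ i, ∑ j, star (v i) * (v i * x * star (v j)) * v j
        = ∑ i, ∑ j, (star (v i) * v i) * x * (star (v j) * v j) := by simp only [term]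
      _ = ∑ i, (star (v i) * v i) * x * (∑ j, star (v j) * v j) := by
          simp only [Finset.mul_sum]
      _ = ∑ i, (star (v i) * v i) * x := by rw [hb₂]; simp [mul_one]
      _ = (∑ i, star (v i) * v i) * x := by rw [Finset.sum_mul]
      _ = x := by rw [hb₂, one_mul]
  -- ### multiplicativity key
  have key : ∀ (b c : Fin n → Fin n → B), (∀ i j, b i j * p = b i j) →
      (∑ i, ∑ j, star (v i) * b i j * v j) * (∑ i, ∑ j, star (v i) * c i j * v j)
        = ∑ i, ∑ j, star (v i) * (∑ k, b i k * c k j) * v j := by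
    intro b c hb
    have cross : ∀ i k l j, (star (v i) * b i k * v k) * (star (v l) * c l j * v j)
        = if k = l then star (v i) * (b i k * c k j) * v j else 0 := by
      intro i k l j
      have h1 : (star (v i) * b i k * v k) * (star (v l) * c l j * v j)
          = star (v i) * (b i k * ((v k * star (v l)) * (c l j * v j))) := by
        simp only [mul_assoc]
      rw [h1, hvv]
      split_ifs with h
      · subst h
        rw [← mul_assoc (b i k) p, hb]
        simp only [mul_assoc]
      · simp
    calc (∑ i, ∑ k, star (v i) * b i k * v k) * (∑ l, ∑ j, star (v l) * c l j * v j)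
        = ∑ i, ∑ k, (star (v i) * b i k * v k) * (∑ l, ∑ j, star (v l) * c l j * v j) := by
          simp only [Finset.sum_mul]
      _ = ∑ i, ∑ k, ∑ l, ∑ j, (star (v i) * b i k * v k) * (star (v l) * c l j * v j) := by
          simp only [Finset.mul_sum]
      _ = ∑ i, ∑ k, ∑ l, ∑ j, (if k = l then star (v i) * (b i k * c k j) * v j else 0) := by
          simp only [cross]
      _ = ∑ i, ∑ k, ∑ j, star (v i) * (b i k * c k j) * v j := by
          refine Finset.sum_congr rfl fun i _ => Finset.sum_congr rfl fun k _ => ?_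
          rw [Finset.sum_comm]
          simp
      _ = ∑ i, ∑ j, ∑ k, star (v i) * (b i k * c k j) * v j := by
          refine Finset.sum_congr rfl fun i _ => ?_
          rw [Finset.sum_comm]
      _ = ∑ i, ∑ j, star (v i) * (∑ k, b i k * c k j) * v j := by
          simp only [Finset.mul_sum, Finset.sum_mul]
  -- corner absorption for members of S
  have hSabs : ∀ M : Matrix (Fin n) (Fin n) B,
      (∀ i j, ∃ d ∈ D, M i j = p * d * p) → ∀ i j, p * M i j * p = M i j := by
    intro M hM i j
    obtain ⟨d, _, heq⟩ := hM i j
    rw [heq, habsorb]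
  have hSp : ∀ M : Matrix (Fin n) (Fin n) B,
      (∀ i j, ∃ d ∈ D, M i j = p * d * p) → ∀ i j, M i j * p = M i j := by
    intro M hM i j
    obtain ⟨d, _, heq⟩ := hM i j
    rw [heq, mul_assoc, hpp]
  refine ⟨?_, ?_, ?_, ?_, ?_, ?_⟩
  -- multiplicative
  · intro M hM N hN
    dsimp only
    rw [key (fun i j => M i j) (fun i j => N i j) (hSp M hM)]
    simp only [Matrix.mul_apply]
  -- additive
  · intro M _ N _
    dsimp only
    simp [Matrix.add_apply, mul_add, add_mul, Finset.sum_add_distrib]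
  -- homogeneous
  · intro c M _
    dsimp only
    simp [Matrix.smul_apply, mul_smul_comm, smul_mul_assoc, Finset.smul_sum]
  -- star preserving
  · intro M _
    dsimp only
    simp only [Matrix.star_apply, star_sum, star_mul, star_star]
    rw [Finset.sum_comm]
    simp only [mul_assoc]
  -- injective
  · intro M hM N hN h
    dsimp only at h
    ext i j
    have e1 := entry M i j
    have e2 := entry N i j
    rw [hSabs M hM] at e1
    rw [hSabs N hN] at e2
    rw [← e1, ← e2, h]
  -- image
  · have hvA : ∀ k, v k ∈ NonUnitalStarAlgebra.adjoin ℂ ((D : Set B) ∪ Set.range v) :=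
      fun k => NonUnitalStarAlgebra.subset_adjoin ℂ _ (Or.inr ⟨k, rfl⟩)
    have hDA : ∀ d ∈ D, d ∈ NonUnitalStarAlgebra.adjoin ℂ ((D : Set B) ∪ Set.range v) :=
      fun d hd' => NonUnitalStarAlgebra.subset_adjoin ℂ _ (Or.inl hd')
    have hpA : p ∈ NonUnitalStarAlgebra.adjoin ℂ ((D : Set B) ∪ Set.range v) := by
      rw [hp]; exact mul_mem (hvA z) (star_mem (hvA z))
    -- the closed star subalgebra `T`
    let T : NonUnitalStarSubalgebra ℂ B :=
    { carrier := {x : B | ∀ i j, ∃ d ∈ D, v i * x * star (v j) = p * d * p}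
      add_mem' := by
        rintro x y hx hy i j
        obtain ⟨dx, hdxD, hdx⟩ := hx i j
        obtain ⟨dy, hdyD, hdy⟩ := hy i j
        refine ⟨dx + dy, add_mem hdxD hdyD, ?_⟩
        rw [mul_add, add_mul, hdx, hdy, mul_add p dx dy, add_mul]
      zero_mem' := by
        intro i j
        exact ⟨0, zero_mem D, by simp⟩
      mul_mem' := by
        rintro x y hx hy i j
        choose dx hdxD hdx using hx
        choose dy hdyD hdy using hy
        refine ⟨∑ k, dx i k * p * (p * dy k j),
          sum_mem fun k _ => mul_mem (mul_mem (hdxD i k) hpD) (mul_mem hpD (hdyD k j)), ?_⟩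
        calc v i * (x * y) * star (v j)
            = v i * (x * 1 * y) * star (v j) := by rw [mul_one]
          _ = v i * (x * (∑ k, star (v k) * v k) * y) * star (v j) := by rw [hb₂]
          _ = ∑ k, v i * (x * (star (v k) * v k) * y) * star (v j) := by
              simp only [Finset.mul_sum, Finset.sum_mul]
          _ = ∑ k, (v i * x * star (v k)) * (v k * y * star (v j)) := by
              refine Finset.sum_congr rfl fun k _ => by simp only [mul_assoc]
          _ = ∑ k, (p * dx i k * p) * (p * dy k j * p) := by
              refine Finset.sum_congr rfl fun k _ => by rw [hdx, hdy]
          _ = ∑ k, p * (dx i k * p * (p * dy k j)) * p := by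
              refine Finset.sum_congr rfl fun k _ => by simp only [mul_assoc]
          _ = p * (∑ k, dx i k * p * (p * dy k j)) * p := by
              simp only [Finset.mul_sum, Finset.sum_mul]
      smul_mem' := by
        rintro c x hx i j
        obtain ⟨dx, hdxD, hdx⟩ := hx i j
        refine ⟨c • dx, SMulMemClass.smul_mem c hdxD, ?_⟩
        simp only [mul_smul_comm, smul_mul_assoc]
        rw [hdx]
      star_mem' := by
        rintro x hx i j
        obtain ⟨dx, hdxD, hdx⟩ := hx j i
        refine ⟨star dx, star_mem hdxD, ?_⟩
        calc v i * star x * star (v j)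
            = star (v j * x * star (v i)) := by simp only [star_mul, star_star, mul_assoc]
          _ = star (p * dx * p) := by rw [hdx]
          _ = p * star dx * p := by simp only [star_mul, hps, mul_assoc] }
    -- T is closed
    have hclosed : IsClosed (T : Set B) := by
      have hcorner : {y : B | ∃ d ∈ D, y = p * d * p}
          = (D : Set B) ∩ {y : B | p * y * p = y} := by
        ext y
        constructor
        · rintro ⟨d, hdD, rfl⟩
          exact ⟨mul_mem (mul_mem hpD hdD) hpD, habsorb d⟩
        · rintro ⟨hyD, hyp⟩
          exact ⟨y, hyD, hyp.symm⟩
      have hcc : IsClosed {y : B | ∃ d ∈ D, y = p * d * p} := by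
        rw [hcorner]
        exact hDclosed.inter (isClosed_eq (by fun_prop) continuous_id)
      have hT : (T : Set B)
          = ⋂ i, ⋂ j, (fun x => v i * x * star (v j)) ⁻¹' {y : B | ∃ d ∈ D, y = p * d * p} := by
        ext x
        simp only [Set.mem_iInter, Set.mem_preimage, Set.mem_setOf_eq]
        constructor
        · intro hx i j
          obtain ⟨d, hdD, hdx⟩ := hx i j
          exact ⟨d, hdD, hdx⟩
        · intro hx i j
          obtain ⟨d, hdD, hdx⟩ := hx i j
          exact ⟨d, hdD, hdx⟩
      rw [hT]
      exact isClosed_iInter fun i => isClosed_iInter fun j =>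
        hcc.preimage (by fun_prop)
    -- generators lie in T
    have hgen : (D : Set B) ∪ Set.range v ⊆ (T : Set B) := by
      rintro x (hxD | ⟨k, rfl⟩)
      · intro i j
        by_cases hij : i = j
        · subst hij
          refine ⟨v i * x * star (v i), hd i x hxD, ?_⟩
          rw [show p * (v i * x * star (v i)) * p = (p * v i) * x * (star (v i) * p) by
            simp only [mul_assoc], hpv, hvp]
        · refine ⟨0, zero_mem D, ?_⟩
          rw [mul_zero, zero_mul]
          calc v i * x * star (v j)
              = (v i * (star (v i) * v i)) * x * star (v j) := by rw [hvei]
            _ = v i * ((star (v i) * v i) * x * star (v j)) := by simp only [mul_assoc]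
            _ = v i * (x * (star (v i) * v i) * star (v j)) := by rw [hc i x hxD]
            _ = v i * x * (star (v i) * (v i * star (v j))) := by simp only [mul_assoc]
            _ = 0 := by rw [horth i j hij, mul_zero, mul_zero]
      · intro i j
        rw [mul_assoc, hvv k j]
        by_cases hkj : k = j
        · subst hkj
          rw [if_pos rfl]
          have hpsz : p = star (v z) := by rw [← hps, hpz]
          rw [show v i * p = v i * star (v z) by rw [← hpsz], hvv i z]
          by_cases hiz : i = z
          · refine ⟨1, one_mem D, ?_⟩
            rw [if_pos hiz, mul_one, hpp]
          · refine ⟨0, zero_mem D, ?_⟩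
            rw [if_neg hiz, mul_zero, zero_mul]
        · refine ⟨0, zero_mem D, ?_⟩
          rw [if_neg hkj, mul_zero, mul_zero, zero_mul]
    apply Set.Subset.antisymm
    · rintro x ⟨M, hM, rfl⟩
      dsimp only
      apply subset_closure
      refine sum_mem fun i _ => sum_mem fun j _ => ?_
      obtain ⟨d, hdD, heq⟩ := hM i j
      rw [heq]
      exact mul_mem (mul_mem (star_mem (hvA i)) (mul_mem (mul_mem hpA (hDA d hdD)) hpA)) (hvA j)
    · intro x hx
      have hxT : x ∈ (T : Set B) := by
        refine closure_minimal ?_ hclosed hx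
        intro y hy
        exact NonUnitalStarAlgebra.adjoin_le hgen hy
      refine ⟨Matrix.of fun i j => v i * x * star (v j), ?_, ?_⟩
      · intro i j
        exact hxT i j
      · dsimp only [Matrix.of_apply]
        exact decomp x
end

section
/- Let A be a unital C*-algebra that is generated, as a norm-closed *-subalgebra containing the unit, by N self-adjoint elements. Then for every integer M ≥ N, there exist invertible self-adjoint elements b_1, …, b_M ∈ A with pairwise disjoint spectra such that A is generated, as a norm-closed *-subalgebra containing the unit, by b_1, …, b_M. -/
/-!
Pad the generators with zeros and, after enumerating the index set by distinct naturals `n_i`, put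
`b_i = (n_i + 1) • 1 + ε_i c_i` with `ε_i = (2 (‖c_i‖ + 1))⁻¹ > 0`. Since `‖ε_i c_i‖ < 1 / 2`,
the spectrum of `b_i` lies in a closed ball of radius `< 1 / 2` around `n_i + 1`; these balls are pairwise
disjoint and avoid `0`. Conversely `c_i = ε_i⁻¹ (b_i - (n_i + 1) • 1)`, so the `b_i` generate
everything the `c_i` do.
-/

open Function Metric

section
variable {A : Type*} [CStarAlgebra A]

theorem spectrum_algebraMap_add_subset_closedBall (z : ℂ) (a : A) :
    spectrum ℂ (algebraMap ℂ A z + a) ⊆ closedBall z ‖a‖ := by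
  -- the zero algebra has `‖1‖ = 0`, so it is not a `NormOneClass`; there the spectrum is empty
  rcases subsingleton_or_nontrivial A with _ | _
  · simp [spectrum.of_subsingleton]
  · rw [← spectrum.vadd_eq, ← vadd_closedBall_zero]
    exact Set.vadd_set_mono (spectrum.subset_closedBall_norm a)

theorem isUnit_algebraMap_add_of_norm_lt {z : ℂ} {a : A} (h : ‖a‖ < ‖z‖) :
    IsUnit (algebraMap ℂ A z + a) := by
  refine spectrum.isUnit_of_zero_notMem ℂ fun h0 => ?_
  have := spectrum_algebraMap_add_subset_closedBall z a h0
  rw [mem_closedBall, dist_zero_left] at this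
  linarith

theorem disjoint_spectrum_algebraMap_add {z w : ℂ} {a b : A} (h : ‖a‖ + ‖b‖ < dist z w) :
    Disjoint (spectrum ℂ (algebraMap ℂ A z + a)) (spectrum ℂ (algebraMap ℂ A w + b)) :=
  (closedBall_disjoint_closedBall h).mono (spectrum_algebraMap_add_subset_closedBall z a)
    (spectrum_algebraMap_add_subset_closedBall w b)

end

theorem norm_ofReal_inv_two_mul_norm_add_one_smul_lt {𝕜 E : Type*} [RCLike 𝕜]
    [SeminormedAddCommGroup E] [NormedSpace 𝕜 E] (a : E) :
    ‖(((2 * (‖a‖ + 1))⁻¹ : ℝ) : 𝕜) • a‖ < 1 / 2 := by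
  rw [norm_smul, RCLike.norm_ofReal, abs_of_pos (by positivity), inv_mul_lt_iff₀ (by positivity)]
  linarith

theorem one_le_dist_natCast_complex {m n : ℕ} (h : m ≠ n) : 1 ≤ dist (m : ℂ) n := by
  rw [Complex.dist_of_im_eq (by simp)]
  simpa [Nat.dist_cast_real] using Nat.pairwise_one_le_dist h

theorem StarSubalgebra.mem_of_algebraMap_add_smul_mem {R A : Type*} [Field R] [StarRing R]
    [Ring A] [StarRing A] [Algebra R A] [StarModule R A] (S : StarSubalgebra R A) {z r : R}
    {a : A} (hr : r ≠ 0) (h : algebraMap R A z + r • a ∈ S) : a ∈ S := by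
  have : a = r⁻¹ • (algebraMap R A z + r • a - algebraMap R A z) := by
    rw [add_sub_cancel_left, inv_smul_smul₀ hr]
  rw [this]
  exact S.smul_mem (sub_mem h (S.algebraMap_mem z)) _

theorem IsSelfAdjoint.extend_zero {ι κ R : Type*} [AddMonoid R] [StarAddMonoid R]
    {c : ι → R} (hc : ∀ i, IsSelfAdjoint (c i)) (e : ι → κ) (k : κ) :
    IsSelfAdjoint (Function.extend e c 0 k) := by
  classical
  rw [Function.extend_def]
  split_ifs
  exacts [hc _, .zero _]

theorem exists_isUnit_isSelfAdjoint_disjoint_spectrum_mem_adjoin {A ι : Type*} [CStarAlgebra A]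
    [Countable ι] (c : ι → A) (hc : ∀ i, IsSelfAdjoint (c i)) :
    ∃ b : ι → A, (∀ i, IsSelfAdjoint (b i)) ∧ (∀ i, IsUnit (b i)) ∧
      Pairwise (Disjoint on fun i => spectrum ℂ (b i)) ∧
      ∀ i, c i ∈ StarAlgebra.adjoin ℂ (Set.range b) := by
  obtain ⟨e, he⟩ := Countable.exists_injective_nat ι
  set ε : ι → ℝ := fun i => (2 * (‖c i‖ + 1))⁻¹
  have hε : ∀ i, ‖(ε i : ℂ) • c i‖ < 1 / 2 := fun i =>
    norm_ofReal_inv_two_mul_norm_add_one_smul_lt (c i)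
  refine ⟨fun i => algebraMap ℂ A (e i + 1 : ℕ) + (ε i : ℂ) • c i, fun i => ?_, fun i => ?_,
    fun i j hij => ?_, fun i => ?_⟩
  · exact (IsSelfAdjoint.algebraMap A (.natCast _)).add
      (IsSelfAdjoint.smul (RCLike.conj_ofReal (ε i)) (hc i))
  · refine isUnit_algebraMap_add_of_norm_lt ((hε i).trans_le ?_)
    rw [Complex.norm_natCast, Nat.cast_succ]
    linarith [(e i).cast_nonneg (α := ℝ)]
  · refine disjoint_spectrum_algebraMap_add ?_
    have := one_le_dist_natCast_complex (Nat.succ_injective.ne (he.ne hij))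
    linarith [hε i, hε j]
  · exact StarSubalgebra.mem_of_algebraMap_add_smul_mem _
      (Complex.ofReal_ne_zero.mpr (by positivity)) (StarAlgebra.subset_adjoin ℂ _ ⟨i, rfl⟩)

theorem exists_invertible_selfAdjoint_generators_disjoint_spectra
    {A : Type*} [CStarAlgebra A] (N : ℕ) (c : Fin N → A)
    (hsa : ∀ l, IsSelfAdjoint (c l))
    (hgen : (StarAlgebra.adjoin ℂ (Set.range c)).topologicalClosure = ⊤) :
    ∀ M : ℕ, N ≤ M → ∃ b : Fin M → A,
      (∀ l, IsSelfAdjoint (b l)) ∧ (∀ l, IsUnit (b l)) ∧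
      (∀ l l', l ≠ l' → spectrum ℂ (b l) ∩ spectrum ℂ (b l') = ∅) ∧
      (StarAlgebra.adjoin ℂ (Set.range b)).topologicalClosure = ⊤ := by
  intro M hNM
  obtain ⟨b, hb_sa, hb_unit, hb_disj, hb_gen⟩ :=
    exists_isUnit_isSelfAdjoint_disjoint_spectrum_mem_adjoin
      (Function.extend (Fin.castLE hNM) c 0) (IsSelfAdjoint.extend_zero hsa _)
  refine ⟨b, hb_sa, hb_unit, fun l l' h => Set.disjoint_iff_inter_eq_empty.mp (hb_disj h),
    top_unique (hgen ▸ StarSubalgebra.topologicalClosure_mono (StarAlgebra.adjoin_le ?_))⟩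
  rintro _ ⟨j, rfl⟩
  rw [← (Fin.castLE_injective hNM).extend_apply c 0 j]
  exact hb_gen _
end

section
/- Let A be a unital C*-algebra carrying compatible systems of matrix units e^{(i)}_{j;s,t} as described, such that A is the norm closure of the union of the linear spans A_i of the level-i matrix units, and suppose A is infinite-dimensional and simple. For i < i', 1 ≤ j' ≤ K_i, and 1 ≤ j ≤ K_{i'}, define the multiplicity m_{i,i';j',j} to be the number of indices s ∈ {1,…,n_{i',j}} such that e^{(i')}_{j;s,s} e^{(i)}_{j';1,1} = e^{(i')}_{j;s,s}. Then for every i_0 ∈ ℕ and every N ∈ ℕ there exists i > i_0 such that m_{i_0,i;j',j} > N for all 1 ≤ j' ≤ K_{i_0} and all 1 ≤ j ≤ K_i. -/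
/-- A compatible tower of systems of matrix units in a unital C*-algebra `B`.
At level `i` there are `K i` summands, the `j`-th of which has matrix units
`e i j s t` (`s, t : Fin (n i j)`); the level-`i` units are sums of level-`(i+1)`
units according to the injections `L` (with multiplicities `m`), whose images are
pairwise disjoint and cover each `Fin (n (i+1) j)` (encoded as bijectivity of the
associated map on sigma types). -/
structure MatrixUnitTower (B : Type*) [CStarAlgebra B] where
  K : ℕ → ℕ
  K_pos : ∀ i, 0 < K i
  n : (i : ℕ) → Fin (K i) → ℕ
  n_pos : ∀ i j, 0 < n i j
  e : (i : ℕ) → (j : Fin (K i)) → Fin (n i j) → Fin (n i j) → B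
  e_ne_zero : ∀ i j s t, e i j s t ≠ 0
  e_mul_same : ∀ i j s t u w, e i j s t * e i j u w = if t = u then e i j s w else 0
  e_mul_ne : ∀ i (j j' : Fin (K i)), j ≠ j' → ∀ s t u w, e i j s t * e i j' u w = 0
  e_star : ∀ i j s t, star (e i j s t) = e i j t s
  sum_diag_eq_one : ∀ i, ∑ j, ∑ s, e i j s s = (1 : B)
  m : (i : ℕ) → Fin (K i) → Fin (K (i + 1)) → ℕ
  L : (i : ℕ) → (j' : Fin (K i)) → (j : Fin (K (i + 1))) → Fin (m i j' j) →
      Fin (n i j') → Fin (n (i + 1) j)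
  L_bij : ∀ (i : ℕ) (j : Fin (K (i + 1))),
    Function.Bijective (fun x : Σ j' : Fin (K i), Fin (m i j' j) × Fin (n i j') =>
      L i x.1 j x.2.1 x.2.2)
  e_compat : ∀ (i : ℕ) (j' : Fin (K i)) (l k : Fin (n i j')),
    e i j' l k = ∑ j : Fin (K (i + 1)), ∑ t : Fin (m i j' j),
      e (i + 1) j (L i j' j t l) (L i j' j t k)

/-!
Simplicity forces every nonzero `p` to meet every block of all sufficiently high levels: the
elements `x` such that, eventually, every block unit `r` with `r p = 0` also has `r x = 0`, form
a subspace stable under right multiplication by `A` and left multiplication by the dense union of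
the levels (block units are central in their level). Its closure is therefore a nonzero closed
ideal, hence `A`, and since the units are open the subspace contains a unit, which no nonzero
block unit kills.

Applied to a minimal projection `e` of level `i₀`, this gives a level `i₁` at which `e` splits
into diagonal units meeting every block, so the multiplicities of `e` in later levels are at
least the block sizes divided by `max_j n_{i₁,j}`. Applied to all minimal projections of a level
`a`, it shows that every block of every late level has size at least `∑_j n_{a,j}`, and this total
is unbounded because `A` is infinite dimensional.
-/

open Filter Finset

theorem exists_lt_finrank_of_dense_iUnion {𝕜 E : Type*} [NontriviallyNormedField 𝕜]
    [CompleteSpace 𝕜] [NormedAddCommGroup E] [NormedSpace 𝕜 E] {W : ℕ → Submodule 𝕜 E}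
    [∀ i, FiniteDimensional 𝕜 (W i)] (hW : Monotone W) (hdense : Dense (⋃ i, (W i : Set E)))
    (hE : ¬ FiniteDimensional 𝕜 E) (D : ℕ) : ∃ i, D < Module.finrank 𝕜 (W i) := by
  by_contra! hD
  obtain ⟨_, ⟨i₁, rfl⟩, hi₁⟩ := BddAbove.exists_isGreatest_of_nonempty
    ⟨D, Set.forall_mem_range.2 hD⟩ (Set.range_nonempty fun i => Module.finrank 𝕜 (W i))
  have hle : ∀ i, W i ≤ W i₁ := fun i => by
    rcases le_total i i₁ with h | h
    · exact hW h
    · exact (Submodule.eq_of_le_of_finrank_le (hW h) (hi₁ ⟨i, rfl⟩)).ge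
  have htop : W i₁ = ⊤ := Submodule.eq_top_iff'.2 fun x =>
    (W i₁).closed_of_finiteDimensional.closure_subset_iff.2 (Set.iUnion_subset hle) (hdense x)
  have : FiniteDimensional 𝕜 (⊤ : Submodule 𝕜 E) := htop ▸ inferInstance
  exact hE Submodule.topEquiv.finiteDimensional

theorem exists_isUnit_mem_of_dense_mul_mem {R : Type*} [NormedRing R] [HasSummableGeomSeries R]
    (hsimple : ∀ I : TwoSidedIdeal R, IsClosed (I : Set R) → I = ⊥ ∨ I = ⊤)
    {U : AddSubgroup R} (hU : U ≠ ⊥) {B : Set R} (hB : Dense B)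
    (hBU : ∀ b ∈ B, ∀ x ∈ U, b * x ∈ U) (hUR : ∀ x ∈ U, ∀ z, x * z ∈ U) :
    ∃ x ∈ U, IsUnit x := by
  let I : TwoSidedIdeal R := .mk' (closure U) U.topologicalClosure.zero_mem
    U.topologicalClosure.add_mem U.topologicalClosure.neg_mem
    (fun hy => map_mem_closure₂ continuous_mul (hB _) hy hBU)
    (fun {_ z} hx => map_mem_closure (f := (· * z)) (continuous_mul_const z) hx
      fun x hx => hUR x hx z)
  have hI : (I : Set R) = closure U := TwoSidedIdeal.coe_mk' ..
  have hI_top : I = ⊤ := by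
    refine (hsimple I (hI ▸ isClosed_closure)).resolve_left fun h => hU ?_
    refine (AddSubgroup.eq_bot_iff_forall _).2 fun x hx => ?_
    rw [← TwoSidedIdeal.mem_bot, ← h, ← SetLike.mem_coe, hI]
    exact subset_closure hx
  have h1 : (1 : R) ∈ closure (U : Set R) := by
    rw [← hI, SetLike.mem_coe, hI_top]
    trivial
  obtain ⟨x, hx, hxU⟩ := mem_closure_iff.1 h1 _ Units.isOpen isUnit_one
  exact ⟨x, hxU, hx⟩

namespace MatrixUnitTower

variable {A : Type*} [CStarAlgebra A] (T : MatrixUnitTower A)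

noncomputable def level (i : ℕ) : Submodule ℂ A :=
  Submodule.span ℂ {x : A | ∃ j s t, x = T.e i j s t}

theorem level_mono : Monotone T.level := by
  refine monotone_nat_of_le_succ fun i => Submodule.span_le.2 ?_
  rintro x ⟨j, s, t, rfl⟩
  rw [T.e_compat i j s t]
  exact Submodule.sum_mem _ fun j' _ => Submodule.sum_mem _ fun u _ =>
    Submodule.subset_span ⟨j', _, _, rfl⟩

theorem level_eq_span_range (i : ℕ) : T.level i = Submodule.span ℂ
    (Set.range fun x : Σ j, Fin (T.n i j) × Fin (T.n i j) => T.e i x.1 x.2.1 x.2.2) :=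
  congrArg (Submodule.span ℂ) <| Set.ext fun _ =>
    ⟨fun ⟨j, s, t, h⟩ => ⟨⟨j, s, t⟩, h.symm⟩, fun ⟨⟨j, s, t⟩, h⟩ => ⟨j, s, t, h.symm⟩⟩

instance (i : ℕ) : FiniteDimensional ℂ (T.level i) := by
  rw [level_eq_span_range]
  exact FiniteDimensional.span_of_finite ℂ (Set.finite_range _)

theorem finrank_level_le (i : ℕ) : Module.finrank ℂ (T.level i) ≤ (∑ j, T.n i j) ^ 2 := by
  rw [level_eq_span_range]
  refine (finrank_range_le_card _).trans ?_
  simpa [Fintype.card_sigma, ← sq] using Finset.sum_sq_le_sq_sum_of_nonneg (s := univ)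
    (f := fun j => T.n i j) fun _ _ => Nat.zero_le _

theorem exists_lt_sum_n (hdense : Dense (⋃ i, (T.level i : Set A)))
    (hinfdim : ¬ FiniteDimensional ℂ A) (D : ℕ) : ∃ i, D < ∑ j, T.n i j := by
  obtain ⟨i, hi⟩ := exists_lt_finrank_of_dense_iUnion T.level_mono hdense hinfdim (D ^ 2)
  exact ⟨i, (Nat.pow_lt_pow_iff_left two_ne_zero).1 (hi.trans_le (T.finrank_level_le i))⟩

noncomputable def blockUnit (i : ℕ) (j : Fin (T.K i)) : A := ∑ u, T.e i j u u

theorem blockUnit_mul_e {i : ℕ} (j j' : Fin (T.K i)) (s t : Fin (T.n i j')) :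
    T.blockUnit i j * T.e i j' s t = if j = j' then T.e i j' s t else 0 := by
  rw [blockUnit, Finset.sum_mul]
  split_ifs with h
  · subst h
    simp [T.e_mul_same]
  · exact Finset.sum_eq_zero fun u _ => T.e_mul_ne i j j' h u u s t

theorem e_mul_blockUnit {i : ℕ} (j j' : Fin (T.K i)) (s t : Fin (T.n i j')) :
    T.e i j' s t * T.blockUnit i j = if j = j' then T.e i j' s t else 0 := by
  rw [blockUnit, Finset.mul_sum]
  split_ifs with h
  · subst h
    simp [T.e_mul_same]
  · exact Finset.sum_eq_zero fun u _ => T.e_mul_ne i j' j (Ne.symm h) s t u u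

theorem blockUnit_ne_zero (i : ℕ) (j : Fin (T.K i)) : T.blockUnit i j ≠ 0 := fun h => by
  have := T.blockUnit_mul_e j j ⟨0, T.n_pos i j⟩ ⟨0, T.n_pos i j⟩
  rw [h, zero_mul, if_pos rfl] at this
  exact T.e_ne_zero _ _ _ _ this.symm

theorem commute_blockUnit {i : ℕ} (j : Fin (T.K i)) {b : A} (hb : b ∈ T.level i) :
    Commute (T.blockUnit i j) b := by
  suffices T.level i ≤ (Subalgebra.centralizer ℂ {T.blockUnit i j}).toSubmodule from
    Set.mem_centralizer_iff.1 (this hb) _ rfl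
  refine Submodule.span_le.2 ?_
  rintro _ ⟨j', s, t, rfl⟩
  simp only [Subalgebra.coe_toSubmodule, Subalgebra.coe_centralizer,
    Set.mem_centralizer_iff, Set.mem_singleton_iff, forall_eq]
  rw [T.blockUnit_mul_e, T.e_mul_blockUnit]

theorem eventually_blockUnit_mul_ne_zero (hdense : Dense (⋃ i, (T.level i : Set A)))
    (hsimple : ∀ I : TwoSidedIdeal A, IsClosed (I : Set A) → I = ⊥ ∨ I = ⊤)
    {p : A} (hp : p ≠ 0) : ∀ᶠ i in atTop, ∀ j, T.blockUnit i j * p ≠ 0 := by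
  let U : AddSubgroup A :=
    { carrier := {x | ∀ᶠ i in atTop, ∀ j, T.blockUnit i j * p = 0 → T.blockUnit i j * x = 0}
      zero_mem' := by simp
      add_mem' := fun hx hy => (hx.and hy).mono fun i h j hj => by
        rw [mul_add, h.1 j hj, h.2 j hj, add_zero]
      neg_mem' := fun hx => hx.mono fun i h j hj => by rw [mul_neg, h j hj, neg_zero] }
  have hpU : p ∈ U := Eventually.of_forall fun _ _ => id
  have hU : U ≠ ⊥ := fun h => hp (by rwa [h, AddSubgroup.mem_bot] at hpU)
  have hlevelU : ∀ b ∈ ⋃ i, (T.level i : Set A), ∀ x ∈ U, b * x ∈ U := by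
    rintro b ⟨_, ⟨i₁, rfl⟩, hb⟩ x hx
    filter_upwards [hx, eventually_ge_atTop i₁] with i hi hi₁ j hj
    rw [← mul_assoc, (T.commute_blockUnit j (T.level_mono hi₁ hb)).eq, mul_assoc, hi j hj,
      mul_zero]
  have hUA : ∀ x ∈ U, ∀ z, x * z ∈ U := fun x hx z => hx.mono fun i h j hj => by
    rw [← mul_assoc, h j hj, zero_mul]
  obtain ⟨x, hxU, hx⟩ := exists_isUnit_mem_of_dense_mul_mem hsimple hU hdense hlevelU hUA
  by_contra hfreq
  obtain ⟨i, hij, hi⟩ := ((not_eventually.1 hfreq).and_eventually hxU).exists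
  obtain ⟨j, hj⟩ := not_forall_not.1 hij
  exact T.blockUnit_ne_zero i j (hx.mul_left_eq_zero.1 (hi j hj))

noncomputable def diagSum (i : ℕ) (F : ∀ j : Fin (T.K i), Finset (Fin (T.n i j))) : A :=
  ∑ j, ∑ s ∈ F j, T.e i j s s

open scoped Classical in
noncomputable def diagSupport (x : A) (i : ℕ) (j : Fin (T.K i)) : Finset (Fin (T.n i j)) :=
  univ.filter fun s => T.e i j s s * x = T.e i j s s

def lift (i : ℕ) (F : ∀ j : Fin (T.K i), Finset (Fin (T.n i j))) (j : Fin (T.K (i + 1))) :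
    Finset (Fin (T.n (i + 1) j)) :=
  (univ.sigma fun j' => (univ : Finset (Fin (T.m i j' j))) ×ˢ F j').image
    fun x => T.L i x.1 j x.2.1 x.2.2

/-- `x` is a sum of distinct diagonal matrix units of level `i` (necessarily those indexed by
`T.diagSupport x i`, see `diagSupport_diagSum`). -/
def IsDiagonal (i : ℕ) (x : A) : Prop := T.diagSum i (T.diagSupport x i) = x

theorem e_mul_diagSum {i : ℕ} (F : ∀ j : Fin (T.K i), Finset (Fin (T.n i j)))
    (j : Fin (T.K i)) (s t : Fin (T.n i j)) :
    T.e i j s t * T.diagSum i F = if t ∈ F j then T.e i j s t else 0 := by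
  rw [diagSum, Finset.mul_sum, Finset.sum_eq_single j]
  · simp [Finset.mul_sum, T.e_mul_same]
  · intro j' _ hj'
    rw [Finset.mul_sum]
    exact Finset.sum_eq_zero fun u _ => T.e_mul_ne i j j' hj'.symm s t u u
  · simp

theorem diagSupport_diagSum (i : ℕ) (F : ∀ j : Fin (T.K i), Finset (Fin (T.n i j))) :
    T.diagSupport (T.diagSum i F) i = F := by
  funext j
  ext s
  simp only [diagSupport, Finset.mem_filter, Finset.mem_univ, true_and, T.e_mul_diagSum]
  split_ifs with hs
  · exact iff_of_true rfl hs
  · exact iff_of_false (T.e_ne_zero i j s s).symm hs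

theorem isDiagonal_diagSum (i : ℕ) (F : ∀ j : Fin (T.K i), Finset (Fin (T.n i j))) :
    T.IsDiagonal i (T.diagSum i F) := by
  rw [IsDiagonal, diagSupport_diagSum]

theorem diagSum_lift (i : ℕ) (F : ∀ j : Fin (T.K i), Finset (Fin (T.n i j))) :
    T.diagSum (i + 1) (T.lift i F) = T.diagSum i F := by
  simp only [diagSum, lift]
  rw [Fintype.sum_congr _ _ fun j => Finset.sum_image fun x _ y _ h => (T.L_bij i j).1 h]
  simp only [Finset.sum_sigma, Finset.sum_product]
  rw [Finset.sum_comm]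
  refine Finset.sum_congr rfl fun j' _ => ?_
  calc _ = ∑ j, ∑ s ∈ F j', ∑ t, T.e (i + 1) j (T.L i j' j t s) (T.L i j' j t s) :=
        Finset.sum_congr rfl fun j _ => Finset.sum_comm
    _ = _ := Finset.sum_comm.trans (Finset.sum_congr rfl fun s _ => (T.e_compat i j' s s).symm)

theorem card_lift (i : ℕ) (F : ∀ j : Fin (T.K i), Finset (Fin (T.n i j)))
    (j : Fin (T.K (i + 1))) :
    (T.lift i F j).card = ∑ j', T.m i j' j * (F j').card := by
  rw [lift, Finset.card_image_of_injective _ (T.L_bij i j).1, Finset.card_sigma]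
  simp [Finset.card_product]

theorem n_succ_eq_sum (i : ℕ) (j : Fin (T.K (i + 1))) :
    T.n (i + 1) j = ∑ j', T.m i j' j * T.n i j' := by
  simpa [Fintype.card_sigma] using (Fintype.card_of_bijective (T.L_bij i j)).symm

namespace IsDiagonal

variable {T} {i : ℕ} {x : A}

theorem succ (hx : T.IsDiagonal i x) : T.IsDiagonal (i + 1) x := by
  rw [← hx, ← diagSum_lift]
  exact T.isDiagonal_diagSum _ _

theorem mono {a : ℕ} (hx : T.IsDiagonal a x) (hai : a ≤ i) : T.IsDiagonal i x := by
  induction i, hai using Nat.le_induction with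
  | base => exact hx
  | succ i _ ih => exact ih.succ

theorem diagSupport_succ (hx : T.IsDiagonal i x) :
    T.diagSupport x (i + 1) = T.lift i (T.diagSupport x i) := by
  conv_lhs => rw [← hx, ← diagSum_lift, diagSupport_diagSum]

theorem diagSupport_nonempty (hx : T.IsDiagonal i x) {j : Fin (T.K i)}
    (hjx : T.blockUnit i j * x ≠ 0) : (T.diagSupport x i j).Nonempty := by
  contrapose! hjx
  rw [← hx, diagSum]
  simp only [Finset.mul_sum]
  refine Finset.sum_eq_zero fun j' _ => Finset.sum_eq_zero fun s hs => ?_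
  rw [T.blockUnit_mul_e, if_neg]
  rintro rfl
  simp [hjx] at hs

end IsDiagonal

theorem isDiagonal_e (i : ℕ) (j : Fin (T.K i)) (s : Fin (T.n i j)) :
    T.IsDiagonal i (T.e i j s s) := by
  classical
  have : T.diagSum i (fun j' => univ.filter fun s' => (⟨j', s'⟩ : Σ j, Fin (T.n i j)) = ⟨j, s⟩)
      = T.e i j s s := by
    rw [diagSum, Finset.sum_sigma', show univ.sigma _ = {⟨j, s⟩} by ext ⟨j', s'⟩; simp,
      Finset.sum_singleton]
  exact this ▸ T.isDiagonal_diagSum _ _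

theorem e_mul_e_of_ne {i : ℕ} {α β : Σ j, Fin (T.n i j)} (h : α ≠ β) :
    T.e i α.1 α.2 α.2 * T.e i β.1 β.2 β.2 = 0 := by
  obtain ⟨j, s⟩ := α
  obtain ⟨j', t⟩ := β
  by_cases hj : j = j'
  · subst hj
    rw [T.e_mul_same, if_neg fun hst => h (congrArg _ hst)]
  · exact T.e_mul_ne i j j' hj s s t t

theorem disjoint_diagSupport {x y : A} (hxy : x * y = 0) (i : ℕ) (j : Fin (T.K i)) :
    Disjoint (T.diagSupport x i j) (T.diagSupport y i j) := by
  refine Finset.disjoint_left.2 fun s hsx hsy => T.e_ne_zero i j s s ?_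
  simp only [diagSupport, Finset.mem_filter, Finset.mem_univ, true_and] at hsx hsy
  rw [← hsy, ← hsx, mul_assoc, hxy, mul_zero]

theorem ncard_eq_card_diagSupport (x : A) (i : ℕ) (j : Fin (T.K i)) :
    {s | T.e i j s s * x = T.e i j s s}.ncard = (T.diagSupport x i j).card := by
  classical
  rw [Set.ncard_eq_toFinset_card', Set.toFinset_ofPred]
  rfl

theorem n_le_mul_card_diagSupport {x : A} {i₁ C : ℕ} (hx : T.IsDiagonal i₁ x)
    (hne : ∀ j, (T.diagSupport x i₁ j).Nonempty) (hC : ∀ j, T.n i₁ j ≤ C) {i : ℕ}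
    (hi : i₁ ≤ i) (j : Fin (T.K i)) : T.n i j ≤ C * (T.diagSupport x i j).card := by
  induction i, hi using Nat.le_induction with
  | base => exact (hC j).trans (Nat.le_mul_of_pos_right C (hne j).card_pos)
  | succ i hi ih =>
    refine (T.n_succ_eq_sum i j).trans_le ?_
    rw [(hx.mono hi).diagSupport_succ, card_lift, Finset.mul_sum]
    refine Finset.sum_le_sum fun j' _ => ?_
    calc T.m i j' j * T.n i j' ≤ T.m i j' j * (C * (T.diagSupport x i j').card) :=
          Nat.mul_le_mul_left _ (ih j')
      _ = C * (T.m i j' j * (T.diagSupport x i j').card) := Nat.mul_left_comm ..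

theorem eventually_sum_n_le_n (hdense : Dense (⋃ i, (T.level i : Set A)))
    (hsimple : ∀ I : TwoSidedIdeal A, IsClosed (I : Set A) → I = ⊥ ∨ I = ⊤) (a : ℕ) :
    ∀ᶠ i in atTop, ∀ j, ∑ j', T.n a j' ≤ T.n i j := by
  classical
  filter_upwards [eventually_all.2 fun α : Σ j, Fin (T.n a j) =>
    T.eventually_blockUnit_mul_ne_zero hdense hsimple (T.e_ne_zero a α.1 α.2 α.2),
    eventually_ge_atTop a] with i hi hai j
  let S (α : Σ j, Fin (T.n a j)) := T.diagSupport (T.e a α.1 α.2 α.2) i j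
  calc ∑ j', T.n a j' = ∑ _α : Σ j, Fin (T.n a j), 1 := by simp [Fintype.card_sigma]
    _ ≤ ∑ α, (S α).card := Finset.sum_le_sum fun α _ =>
        (((T.isDiagonal_e a α.1 α.2).mono hai).diagSupport_nonempty (hi α j)).card_pos
    _ = (univ.biUnion S).card :=
        (Finset.card_biUnion fun α _ β _ h => T.disjoint_diagSupport (T.e_mul_e_of_ne h) i j).symm
    _ ≤ T.n i j := (Finset.card_le_univ _).trans_eq (Fintype.card_fin _)

theorem eventually_lt_n (hdense : Dense (⋃ i, (T.level i : Set A)))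
    (hsimple : ∀ I : TwoSidedIdeal A, IsClosed (I : Set A) → I = ⊥ ∨ I = ⊤)
    (hinfdim : ¬ FiniteDimensional ℂ A) (D : ℕ) : ∀ᶠ i in atTop, ∀ j, D < T.n i j := by
  obtain ⟨a, ha⟩ := T.exists_lt_sum_n hdense hinfdim D
  exact (T.eventually_sum_n_le_n hdense hsimple a).mono fun i hi j => ha.trans_le (hi j)

end MatrixUnitTower

/-- The multiplicity `m_{i₀,i;j',j}` is realized as the number of
`s` with `e i j s s * e i₀ j' 0 0 = e i j s s` (`0` being the first index, i.e. the
paper's `e^{(i₀)}_{j';1,1}`). -/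
theorem exists_large_multiplicities
    {A : Type*} [CStarAlgebra A] (T : MatrixUnitTower A)
    (hA_eq : closure (⋃ i : ℕ,
      (Submodule.span ℂ {x : A | ∃ j s t, x = T.e i j s t} : Set A)) = Set.univ)
    (hA_infdim : ¬ FiniteDimensional ℂ A)
    (hA_simple : ∀ I : TwoSidedIdeal A, IsClosed (I : Set A) → I = ⊥ ∨ I = ⊤) :
    ∀ i₀ N : ℕ, ∃ i : ℕ, i₀ < i ∧
      ∀ (j' : Fin (T.K i₀)) (j : Fin (T.K i)),
        N < Set.ncard {s : Fin (T.n i j) |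
          T.e i j s s * T.e i₀ j' ⟨0, T.n_pos i₀ j'⟩ ⟨0, T.n_pos i₀ j'⟩ = T.e i j s s} := by
  intro i₀ N
  have hdense : Dense (⋃ i, (T.level i : Set A)) := dense_iff_closure_eq.2 hA_eq
  have hp (j' : Fin (T.K i₀)) := T.isDiagonal_e i₀ j' ⟨0, T.n_pos i₀ j'⟩
  obtain ⟨i₁, hmeet, hi₀i₁⟩ := ((eventually_all.2 fun j' =>
    T.eventually_blockUnit_mul_ne_zero hdense hA_simple (T.e_ne_zero i₀ j' _ _)).and
    (eventually_ge_atTop i₀)).exists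
  set C := univ.sup (T.n i₁)
  obtain ⟨i, hi₁i, hlarge⟩ := ((eventually_gt_atTop i₁).and
    (T.eventually_lt_n hdense hA_simple hA_infdim (N * C))).exists
  refine ⟨i, hi₀i₁.trans_lt hi₁i, fun j' j => ?_⟩
  rw [T.ncard_eq_card_diagSupport]
  have hle := T.n_le_mul_card_diagSupport ((hp j').mono hi₀i₁)
    (fun j => ((hp j').mono hi₀i₁).diagSupport_nonempty (hmeet j' j))
    (fun j => Finset.le_sup (f := T.n i₁) (Finset.mem_univ j)) hi₁i.le j
  exact Nat.lt_of_mul_lt_mul_right (a := C) ((hlarge j).trans_le (mul_comm C _ ▸ hle))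
end
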